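/- Fix an even integer t ≥ 4. For every integer d ≥ 2 with d ≡ 0 (mod 2(t−2)), there exists a d-regular bipartite simple graph G such that χ'_t(G) ≥ d^t/(e · t · 2^{t−1}), where e is Euler's number. -/

import Mathlib

/-!
Take `k = t - 1` (odd) and an alphabet of size `d / 2`. The vertices are pairs `(i, x)` with
`i : ZMod 4` and `x` a word of length `k`; `(i, x)` is joined to `(i + 1, x')` whenever `x'` arises
from `x` by deleting the first letter and appending a new one (a de Bruijn digraph, layered over
`ZMod 4`). Successors and predecessors lie in the distinct layers `i + 1` and `i - 1`, so every
vertex has degree `d`, and the parity of the layer is a 2-colouring. As `k` is odd, two vertices in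
layers of opposite parity are joined by a walk of length exactly `k` that runs forward (or backward)
through the layers shifting in the letters of the target word. Hence any two edges have endpoints at
distance `≤ t - 1`, the `t`-th power of the line graph is complete, and
`χ'_t(G) = |E(G)| = 4 (d / 2) ^ t`, far above `d ^ t / (e t 2 ^ (t - 1))`.
-/

/-- The `t`-th power of a simple graph `G`: two distinct vertices are adjacent iff
there is a path with at most `t` edges between them in `G`. -/
def SimpleGraph.power {V : Type*} (G : SimpleGraph V) (t : ℕ) : SimpleGraph V where
  Adj u v := u ≠ v ∧ ∃ p : G.Walk u v, p.IsPath ∧ p.length ≤ t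
  symm := by
    constructor
    rintro u v ⟨h, p, hp, hl⟩
    exact ⟨h.symm, p.reverse, hp.reverse, by simpa using hl⟩
  loopless := by constructor; rintro v ⟨h, -⟩; exact h rfl

/-- The distance-`t` chromatic number `χ_t(G)`. -/
noncomputable def distChromNum {V : Type*} (G : SimpleGraph V) (t : ℕ) : ℕ∞ :=
  (G.power t).chromaticNumber

/-- The distance-`t` chromatic index `χ'_t(G)`. -/
noncomputable def distChromIndex {V : Type*} (G : SimpleGraph V) (t : ℕ) : ℕ∞ :=
  ((G.lineGraph).power t).chromaticNumber

/-- `G` contains no cycle of length `ℓ` as a subgraph. -/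
def CycleFree {V : Type*} (G : SimpleGraph V) (ℓ : ℕ) : Prop :=
  ∀ (v : V) (p : G.Walk v v), p.IsCycle → p.length ≠ ℓ

/-- `G` is bipartite: the vertex set can be partitioned into two independent sets. -/
def BipartiteGraph {V : Type*} (G : SimpleGraph V) : Prop :=
  ∃ s : Set V, ∀ u v : V, G.Adj u v → (u ∈ s ↔ v ∉ s)

namespace SimpleGraph

variable {V : Type*} {G : SimpleGraph V}

lemma ncard_neighborSet_fromRel [Finite V] {r : V → V → Prop} (hr : ∀ u v, r u v → ¬r v u)
    (u : V) :
    ((fromRel r).neighborSet u).ncard = {v | r u v}.ncard + {v | r v u}.ncard := by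
  have hne : ∀ v, r u v ∨ r v u → u ≠ v := by
    rintro v (h | h) rfl <;> exact hr _ _ h h
  have hnbr : (fromRel r).neighborSet u = {v | r u v} ∪ {v | r v u} := by
    ext v
    simp only [mem_neighborSet, fromRel_adj, Set.mem_union, Set.mem_ofPred_eq]
    exact ⟨And.right, fun h => ⟨hne v h, h⟩⟩
  rw [hnbr, Set.ncard_union_eq]
  exact Set.disjoint_left.mpr fun v h h' => hr _ _ h h'

lemma exists_lineGraph_walk_length_le {u v : V} (p : G.Walk u v) (e f : G.edgeSet)
    (hu : u ∈ (e : Sym2 V)) (hv : v ∈ (f : Sym2 V)) :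
    ∃ q : G.lineGraph.Walk e f, q.length ≤ p.length + 1 := by
  induction p generalizing e with
  | nil =>
    by_cases hef : e = f
    · exact ⟨hef ▸ .nil, by subst hef; simp⟩
    · exact ⟨.cons (lineGraph_adj_iff_exists.mpr ⟨hef, _, hu, hv⟩) .nil, by simp⟩
  | @cons a b c hab p ih =>
    let E : G.edgeSet := ⟨s(a, b), hab⟩
    by_cases hE : E = e
    · obtain ⟨q, hq⟩ := ih e (hE ▸ Sym2.mem_mk_right a b) hv
      exact ⟨q, by simp only [Walk.length_cons]; omega⟩
    · obtain ⟨q, hq⟩ := ih E (Sym2.mem_mk_right a b) hv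
      have heE : G.lineGraph.Adj e E :=
        lineGraph_adj_iff_exists.mpr ⟨Ne.symm hE, a, hu, Sym2.mem_mk_left a b⟩
      exact ⟨.cons heE q, by simp only [Walk.length_cons]; omega⟩

lemma lineGraph_power_eq_top {t : ℕ}
    (h : ∀ e f : G.edgeSet, ∃ u ∈ (e : Sym2 V), ∃ v ∈ (f : Sym2 V),
      ∃ p : G.Walk u v, p.length + 1 ≤ t) :
    G.lineGraph.power t = ⊤ := by
  classical
  ext e f
  refine ⟨And.left, fun hef => ⟨hef, ?_⟩⟩
  obtain ⟨u, hu, v, hv, p, hp⟩ := h e f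
  obtain ⟨q, hq⟩ := exists_lineGraph_walk_length_le p e f hu hv
  exact ⟨q.bypass, q.bypass_isPath, q.length_bypass_le_length.trans (hq.trans hp)⟩

lemma Coloring.exists_mem_mem_color_ne (c : G.Coloring Bool) (e f : G.edgeSet) :
    ∃ u ∈ (e : Sym2 V), ∃ v ∈ (f : Sym2 V), c u ≠ c v := by
  obtain ⟨e, he⟩ := e
  obtain ⟨f, hf⟩ := f
  induction e using Sym2.ind with | _ a b => ?_
  induction f using Sym2.ind with | _ p q => ?_
  have hpq : c p ≠ c q := c.valid hf
  by_cases hap : c a = c p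
  · exact ⟨a, Sym2.mem_mk_left a b, q, Sym2.mem_mk_right p q, hap ▸ hpq⟩
  · exact ⟨a, Sym2.mem_mk_left a b, p, Sym2.mem_mk_left p q, hap⟩

lemma Coloring.bipartiteGraph (c : G.Coloring Bool) : BipartiteGraph G :=
  ⟨{v | c v}, fun _ _ h => by simpa [Bool.eq_not_iff] using c.valid h⟩

end SimpleGraph

namespace LayeredDeBruijn

open SimpleGraph

variable {k : ℕ} {α : Type*}

def shiftLeft (x : Fin k → α) (a : α) : Fin k → α :=
  fun m => if h : m.val + 1 < k then x ⟨m + 1, h⟩ else a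

def shiftRight (x : Fin k → α) (b : α) : Fin k → α :=
  fun m => if m.val = 0 then b else x ⟨m - 1, by omega⟩

lemma shiftLeft_injective (hk : 0 < k) (x : Fin k → α) : Function.Injective (shiftLeft x) :=
  fun a b h => by
    have h := congrFun h ⟨k - 1, by omega⟩
    simp only [shiftLeft] at h
    rwa [dif_neg (by omega), dif_neg (by omega)] at h

lemma shiftRight_injective (hk : 0 < k) (x : Fin k → α) : Function.Injective (shiftRight x) :=
  fun a b h => by simpa [shiftRight] using congrFun h ⟨0, hk⟩

lemma shiftRight_shiftLeft (hk : 0 < k) (y : Fin k → α) (a : α) :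
    shiftRight (shiftLeft y a) (y ⟨0, hk⟩) = y := by
  funext m
  simp only [shiftRight, shiftLeft]
  split_ifs <;> first | omega | contradiction | exact congrArg _ (Fin.ext (by grind))

lemma shiftLeft_shiftRight (hk : 0 < k) (x : Fin k → α) (b : α) :
    shiftLeft (shiftRight x b) (x ⟨k - 1, by omega⟩) = x := by
  funext m
  simp only [shiftLeft, shiftRight]
  split_ifs <;> first | omega | contradiction | exact congrArg _ (Fin.ext (by grind))

def Step (u v : ZMod 4 × (Fin k → α)) : Prop :=
  v.1 = u.1 + 1 ∧ ∃ a, v.2 = shiftLeft u.2 a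

def graph (k : ℕ) (α : Type*) : SimpleGraph (ZMod 4 × (Fin k → α)) :=
  SimpleGraph.fromRel Step

lemma step_asymm (u v : ZMod 4 × (Fin k → α)) : Step u v → ¬Step v u := by
  rintro ⟨huv, -⟩ ⟨hvu, -⟩
  rw [huv] at hvu
  revert hvu
  generalize u.1 = i
  decide +revert

lemma graph_adj {u v : ZMod 4 × (Fin k → α)} : (graph k α).Adj u v ↔ Step u v ∨ Step v u := by
  refine (SimpleGraph.fromRel_adj _ _ _).trans ⟨And.right, fun h => ⟨?_, h⟩⟩
  rintro rfl
  rcases h with h | h <;> exact step_asymm _ _ h h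

lemma setOf_step_eq_range (u : ZMod 4 × (Fin k → α)) :
    {v | Step u v} = Set.range fun a => (u.1 + 1, shiftLeft u.2 a) := by
  ext ⟨i, y⟩
  simp only [Step, Set.mem_ofPred_eq, Set.mem_range, Prod.ext_iff]
  constructor
  · rintro ⟨rfl, a, rfl⟩
    exact ⟨a, rfl, rfl⟩
  · rintro ⟨a, rfl, rfl⟩
    exact ⟨rfl, a, rfl⟩

lemma setOf_flip_step_eq_range (hk : 0 < k) (u : ZMod 4 × (Fin k → α)) :
    {v | Step v u} = Set.range fun b => (u.1 - 1, shiftRight u.2 b) := by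
  ext ⟨i, y⟩
  simp only [Step, Set.mem_ofPred_eq, Set.mem_range, Prod.ext_iff]
  constructor
  · rintro ⟨hi, a, hy⟩
    exact ⟨y ⟨0, hk⟩, by rw [hi]; ring, by rw [hy, shiftRight_shiftLeft hk y a]⟩
  · rintro ⟨b, rfl, rfl⟩
    exact ⟨by ring, _, (shiftLeft_shiftRight hk u.2 b).symm⟩

lemma ncard_neighborSet [Finite α] (hk : 0 < k) (u : ZMod 4 × (Fin k → α)) :
    ((graph k α).neighborSet u).ncard = 2 * Nat.card α := by
  rw [graph, SimpleGraph.ncard_neighborSet_fromRel step_asymm, setOf_step_eq_range,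
    setOf_flip_step_eq_range hk, Set.ncard_range_of_injective, Set.ncard_range_of_injective]
  · ring
  · exact fun a b h => shiftRight_injective hk u.2 (congrArg Prod.snd h)
  · exact fun a b h => shiftLeft_injective hk u.2 (congrArg Prod.snd h)

def parityColoring : (graph k α).Coloring Bool :=
  SimpleGraph.Coloring.mk (fun v => decide (Even v.1.val)) fun {u v} huv => by
    have key : ∀ i : ZMod 4, decide (Even (i + 1).val) ≠ decide (Even i.val) := by decide
    rcases graph_adj.mp huv with ⟨h, -⟩ | ⟨h, -⟩
    · rw [h]; exact (key u.1).symm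
    · rw [h]; exact key v.1

lemma exists_walk_forward (i : ZMod 4) (j : ℕ) (hj : j ≤ k) (x y : Fin k → α)
    (hxy : ∀ m (h : m + j < k), y ⟨m, by omega⟩ = x ⟨m + j, h⟩) :
    ∃ p : (graph k α).Walk (i, x) (i + j, y), p.length = j := by
  induction j generalizing i x with
  | zero =>
    have hyx : y = x := funext fun m => hxy m.1 m.2
    exact ⟨Walk.nil.copy rfl (by simp [hyx]), by simp⟩
  | succ j ih =>
    -- the letter shifted in now ends up at position `k - 1 - j` after the remaining `j` steps
    let x' := shiftLeft x (y ⟨k - 1 - j, by omega⟩)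
    have hx'y : ∀ m (h : m + j < k), y ⟨m, by omega⟩ = x' ⟨m + j, h⟩ := by
      intro m h
      simp only [x', shiftLeft]
      split_ifs with h'
      · exact hxy m (by omega)
      · exact congrArg y (Fin.ext (by grind))
    obtain ⟨p, hp⟩ := ih (i + 1) (by omega) x' hx'y
    have hadj : (graph k α).Adj (i, x) (i + 1, x') := graph_adj.mpr (Or.inl ⟨rfl, _, rfl⟩)
    refine ⟨(p.cons hadj).copy rfl (by push_cast; ring_nf), ?_⟩
    simp [hp]

lemma exists_walk_of_color_ne (hk : Odd k) (u v : ZMod 4 × (Fin k → α))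
    (huv : parityColoring u ≠ parityColoring v) :
    ∃ p : (graph k α).Walk u v, p.length = k := by
  have key : ∀ i j c : ZMod 4, decide (Even i.val) ≠ decide (Even j.val) → Odd c.val →
      j = i + c ∨ i = j + c := by decide
  have hk4 : Odd (k : ZMod 4).val := by
    rw [ZMod.val_natCast, Nat.odd_iff, Nat.mod_mod_of_dvd _ (by norm_num)]
    exact Nat.odd_iff.mp hk
  obtain ⟨i, x⟩ := u
  obtain ⟨j, y⟩ := v
  rcases key i j k huv hk4 with rfl | rfl
  · exact exists_walk_forward i k le_rfl x y (fun m h => by omega)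
  · obtain ⟨p, hp⟩ := exists_walk_forward j k le_rfl y x (fun m h => by omega)
    exact ⟨p.reverse, by simp [hp]⟩

lemma lineGraph_power_eq_top (hk : Odd k) :
    (graph k α).lineGraph.power (k + 1) = ⊤ :=
  SimpleGraph.lineGraph_power_eq_top fun e f => by
    obtain ⟨u, hu, v, hv, huv⟩ := parityColoring.exists_mem_mem_color_ne e f
    obtain ⟨p, hp⟩ := exists_walk_of_color_ne hk u v huv
    exact ⟨u, hu, v, hv, p, by omega⟩

lemma card_edgeSet [Fintype α] (hk : 0 < k) :
    Nat.card (graph k α).edgeSet = 4 * Fintype.card α ^ (k + 1) := by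
  classical
  have hsum := (graph k α).sum_degrees_eq_twice_card_edges
  have hdeg : ∀ v, (graph k α).degree v = 2 * Fintype.card α := fun v => by
    rw [← SimpleGraph.card_neighborSet_eq_degree, ← Nat.card_eq_fintype_card,
      Nat.card_coe_set_eq, ncard_neighborSet hk, Nat.card_eq_fintype_card]
  simp only [hdeg, Finset.sum_const, Finset.card_univ, Fintype.card_prod, ZMod.card,
    Fintype.card_fun, Fintype.card_fin, smul_eq_mul, SimpleGraph.edgeFinset_card] at hsum
  rw [Nat.card_eq_fintype_card]
  linarith [pow_succ (Fintype.card α) k]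

end LayeredDeBruijn

lemma two_mul_pow_div_le_four_mul_pow {σ : ℝ} (hσ : 0 ≤ σ) (n : ℕ) :
    (2 * σ) ^ (n + 1) / (Real.exp 1 * (n + 1) * 2 ^ n) ≤ 4 * σ ^ (n + 1) := by
  have he : 1 ≤ Real.exp 1 * (n + 1) :=
    one_le_mul_of_one_le_of_one_le (Real.one_le_exp zero_le_one) (by simp)
  have hpos : (0 : ℝ) ≤ 2 ^ n * σ ^ (n + 1) := by positivity
  rw [div_le_iff₀ (by positivity), mul_pow, pow_succ 2]
  nlinarith [mul_le_mul_of_nonneg_left he hpos]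

theorem bipartite_regular_graph_large_distance_chromatic_index_general
    (t : ℕ) (ht : 4 ≤ t) (htEven : Even t) (d : ℕ)
    (hdvd : 2 * (t - 2) ∣ d) :
    ∃ (V : Type) (_ : Fintype V) (G : SimpleGraph V),
      (∀ v : V, (G.neighborSet v).ncard = d) ∧ BipartiteGraph G ∧
      (d : ℝ) ^ t / (Real.exp 1 * t * 2 ^ (t - 1)) ≤ ((distChromIndex G t).toNat : ℝ) := by
  classical
  obtain ⟨k, rfl⟩ : ∃ k, t = k + 1 := ⟨t - 1, by omega⟩
  obtain ⟨σ, rfl⟩ : 2 ∣ d := (Dvd.intro _ rfl).trans hdvd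
  have hk : Odd k := Nat.not_even_iff_odd.mp (Nat.even_add_one.mp htEven)
  have hk0 : 0 < k := by omega
  refine ⟨ZMod 4 × (Fin k → Fin σ), inferInstance, LayeredDeBruijn.graph k (Fin σ),
    fun v => by rw [LayeredDeBruijn.ncard_neighborSet hk0, Nat.card_fin],
    LayeredDeBruijn.parityColoring.bipartiteGraph, ?_⟩
  rw [distChromIndex, LayeredDeBruijn.lineGraph_power_eq_top hk, SimpleGraph.chromaticNumber_top,
    ENat.toNat_natCast, ← Nat.card_eq_fintype_card, LayeredDeBruijn.card_edgeSet hk0,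
    Fintype.card_fin, Nat.add_sub_cancel]
  push_cast
  exact two_mul_pow_div_le_four_mul_pow σ.cast_nonneg k

/-- Proposition 9: for fixed even `t ≥ 4` and every `d ≥ 2` divisible by `2(t-2)`,
there is a `d`-regular bipartite graph `G` with `χ'_t(G) ≥ d^t / (e t 2^{t-1})`. -/
theorem bipartite_regular_graph_large_distance_chromatic_index
    (t : ℕ) (ht : 4 ≤ t) (htEven : Even t) (d : ℕ) (hd : 2 ≤ d)
    (hdvd : 2 * (t - 2) ∣ d) :
    ∃ (V : Type) (_ : Fintype V) (G : SimpleGraph V),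
      (∀ v : V, (G.neighborSet v).ncard = d) ∧ BipartiteGraph G ∧
      (d : ℝ) ^ t / (Real.exp 1 * t * 2 ^ (t - 1)) ≤ ((distChromIndex G t).toNat : ℝ) :=
  bipartite_regular_graph_large_distance_chromatic_index_general t ht htEven d hdvd
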